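/- Let (A, p₊) be an idempotent Rota–Baxter algebra of weight −1 and j ∈ U(QSh(A), A) as above. Define j₊, j₋ ∈ U(QSh(A), A) by j₊(1) = j₋(1) = 1_A and, for r ≥ 1 and a word 𝐚 = a_1…a_r: j₊(𝐚) = (−1)^{r−1} p₊( p₋( … ( p₋( p₋(a_1) ·_A a_2 ) ·_A a_3 ) … ·_A a_{r−1} ) ·_A a_r ) and j₋(𝐚) = (−1)^{r} p₋( p₋( … ( p₋( p₋(a_1) ·_A a_2 ) ·_A a_3 ) … ·_A a_{r−1} ) ·_A a_r ). Then j₊ ∈ U(QSh(A), A₊), j₋ ∈ U(QSh(A), A₋), and j₋ * j = j₊, i.e. (j₊, j₋) is the Birkhoff decomposition of j. Moreover, if A is commutative, then j₊ and j₋ are characters: j₋(𝐚 ⧢ 𝐛) = j₋(𝐚) j₋(𝐛) and likewise for j₊. -/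

import Mathlib

open scoped TensorProduct
open TensorProduct

noncomputable section

namespace QShPaper

variable (k : Type*) [Field k]

/-! ### Convolution algebra of linear maps from a coalgebra to an algebra -/

section Conv

variable {Q : Type*} [AddCommGroup Q] [Module k Q]
variable (A : Type*) [Ring A] [Algebra k A]

/-- The convolution product `f * g := m_A ∘ (f ⊗ g) ∘ Δ` associated to a
comultiplication `com` on `Q`. -/
def conv (com : Q →ₗ[k] Q ⊗[k] Q) (f g : Q →ₗ[k] A) : Q →ₗ[k] A :=
  LinearMap.mul' k A ∘ₗ TensorProduct.map f g ∘ₗ com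

/-- The unit `u_A ∘ η` of the convolution product. -/
def convUnit (cou : Q →ₗ[k] k) : Q →ₗ[k] A := Algebra.linearMap k A ∘ₗ cou

/-- Convolution powers `f^{*n}`, with `f^{*0}` the convolution unit. -/
def convPow (com : Q →ₗ[k] Q ⊗[k] Q) (cou : Q →ₗ[k] k) (f : Q →ₗ[k] A) : ℕ → (Q →ₗ[k] A)
  | 0 => convUnit k A cou
  | n + 1 => conv k A com f (convPow com cou f n)

end Conv

/-! ### Iterated (reduced) coproducts, conilpotency -/

section Red

variable {Q : Type*} [AddCommGroup Q] [Module k Q]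

/-- `Q ≃ Q^{⊗1}`. -/
def toPow1 : Q ≃ₗ[k] ⨂[k]^1 Q := (PiTensorProduct.subsingletonEquiv (s := fun _ : Fin 1 => Q) (0 : Fin 1)).symm

variable (one : Q) (com : Q →ₗ[k] Q ⊗[k] Q)

/-- The reduced coproduct `Δ'(h) := Δ(h) − 1 ⊗ h − h ⊗ 1`. -/
def redComul : Q →ₗ[k] Q ⊗[k] Q :=
  com - TensorProduct.mk k Q Q one - (TensorProduct.mk k Q Q).flip one

/-- Iterated reduced coproducts: `redIter n = Δ'^{[n+1]} : Q → Q^{⊗(n+1)}`,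
with `Δ'^{[1]} = Id` and `Δ'^{[n+1]} = (Id ⊗ Δ'^{[n]}) ∘ Δ'`. -/
def redIter : (n : ℕ) → Q →ₗ[k] ⨂[k]^(n+1) Q
  | 0 => (toPow1 k).toLinearMap
  | n + 1 =>
      (TensorPower.cast k Q (show 1 + (n+1) = n+1+1 by omega)).toLinearMap ∘ₗ
        (TensorPower.mulEquiv (R := k) (M := Q) (n := 1) (m := n+1)).toLinearMap ∘ₗ
          TensorProduct.map (toPow1 k).toLinearMap (redIter n) ∘ₗ redComul k one com

/-- Iterated coproducts: `fullIter n = Δ^{[n+1]} : Q → Q^{⊗(n+1)}`,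
with `Δ^{[1]} = Id` and `Δ^{[n+1]} = (Id ⊗ Δ^{[n]}) ∘ Δ`. -/
def fullIter : (n : ℕ) → Q →ₗ[k] ⨂[k]^(n+1) Q
  | 0 => (toPow1 k).toLinearMap
  | n + 1 =>
      (TensorPower.cast k Q (show 1 + (n+1) = n+1+1 by omega)).toLinearMap ∘ₗ
        (TensorPower.mulEquiv (R := k) (M := Q) (n := 1) (m := n+1)).toLinearMap ∘ₗ
          TensorProduct.map (toPow1 k).toLinearMap (fullIter n) ∘ₗ com

/-- A (coaugmented) coalgebra is (locally) conilpotent if every element of the kernel of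
the counit. is annihilated by some iterated reduced coproduct. -/
def IsConilpotent (cou : Q →ₗ[k] k) : Prop :=
  ∀ x ∈ LinearMap.ker cou, ∃ n, redIter k one com n x = 0

end Red

/-- `m_A^{[n]} ∘ f^{⊗n} : H^{⊗n} → A`. -/
def prodPow {H : Type*} [AddCommGroup H] [Module k H] (A : Type*) [Ring A] [Algebra k A]
    (f : H →ₗ[k] A) (n : ℕ) : (⨂[k]^n H) →ₗ[k] A :=
  PiTensorProduct.lift ((MultilinearMap.mkPiAlgebraFin k n A).compLinearMap fun _ => f)


/-- A model of the quasi-shuffle Hopf algebra `QSh(A) = ⊕_{n≥0} A^{⊗n}` over a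
(possibly non-unital) associative algebra `A`: `emp` is the empty word, `cons` is
prepending of a letter, `mul` is the quasi-shuffle product `⧢`, `comul` the
deconcatenation coproduct and `counit` the counit. -/
structure QShModel (A Q : Type*) [NonUnitalRing A] [Module k A]
    [SMulCommClass k A A] [IsScalarTower k A A] [AddCommGroup Q] [Module k Q] where
  emp : Q
  cons : A →ₗ[k] Q →ₗ[k] Q
  mul : Q →ₗ[k] Q →ₗ[k] Q
  comul : Q →ₗ[k] Q ⊗[k] Q
  counit : Q →ₗ[k] k
  /-- words span `QSh(A)` -/
  span_words : Submodule.span k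
    (Set.range fun w : List A => w.foldr (fun a u => cons a u) emp) = ⊤
  /-- `QSh(A) ≅ k ⊕ (A ⊗ QSh(A))` via `(c, a ⊗ u) ↦ c • 1 + a·u` -/
  theta_bij : Function.Bijective
    ((LinearMap.toSpanSingleton k Q emp).coprod (TensorProduct.lift cons))
  mul_emp_left : ∀ u, mul emp u = u
  mul_emp_right : ∀ u, mul u emp = u
  /-- the quasi-shuffle recursion `av ⧢ bw = a(v ⧢ bw) + b(av ⧢ w) + (a·_A b)(v ⧢ w)` -/
  mul_cons : ∀ (a b : A) (v w : Q),
    mul (cons a v) (cons b w) =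
      cons a (mul v (cons b w)) + cons b (mul (cons a v) w) + cons (a * b) (mul v w)
  comul_emp : comul emp = emp ⊗ₜ[k] emp
  /-- the deconcatenation recursion -/
  comul_cons : ∀ (a : A) (u : Q),
    comul (cons a u) = emp ⊗ₜ[k] (cons a u) + (TensorProduct.map (cons a) LinearMap.id) (comul u)
  counit_emp : counit emp = 1
  counit_cons : ∀ (a : A) (u : Q), counit (cons a u) = 0

namespace QShModel

variable {k}
variable {A Q : Type*} [NonUnitalRing A] [Module k A]
    [SMulCommClass k A A] [IsScalarTower k A A] [AddCommGroup Q] [Module k Q]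

/-- The word `a_1…a_n ∈ QSh(A)`. -/
def ofWord (M : QShModel k A Q) (w : List A) : Q := w.foldr (fun a u => M.cons a u) M.emp

/-- The collapse `H^{⊗(n+1)} → QSh(A)`, `x_1 ⊗ … ⊗ x_{n+1} ↦ c(x_1)…c(x_{n+1})`
(a word of length `n+1`) induced by a linear map `c : H → A`. -/
def wordMap (M : QShModel k A Q) {H : Type*} [AddCommGroup H] [Module k H]
    (c : H →ₗ[k] A) : (n : ℕ) → (⨂[k]^(n+1) H) →ₗ[k] Q
  | 0 => ((M.cons ∘ₗ c).flip M.emp) ∘ₗ (toPow1 k).symm.toLinearMap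
  | n + 1 =>
      TensorProduct.lift (M.cons ∘ₗ c) ∘ₗ
        TensorProduct.map (toPow1 k).symm.toLinearMap (M.wordMap c n) ∘ₗ
          (TensorPower.mulEquiv (R := k) (M := H) (n := 1) (m := n+1)).symm.toLinearMap ∘ₗ
            (TensorPower.cast k H (show n+1+1 = 1+(n+1) by omega)).toLinearMap

/-- `Ψ = QSh(c) ∘ ι : H → QSh(A)`, i.e. `Ψ(1) = 1` and, for `h` in the kernel of the
counit, `Ψ(h) = Σ_{n≥1} c^{⊗n}(Δ'^{[n]}(h))` (a finite sum, each term being viewed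
as a word of length `n`). -/
def IotaComp (M : QShModel k A Q) {H : Type*} [AddCommGroup H] [Module k H]
    (oneH : H) (com : H →ₗ[k] H ⊗[k] H) (cou : H →ₗ[k] k)
    (c : H →ₗ[k] A) (Ψ : H →ₗ[k] Q) : Prop :=
  Ψ oneH = M.emp ∧
    ∀ h ∈ LinearMap.ker cou, ∃ N, ∀ n ≥ N,
      Ψ h = ∑ i ∈ Finset.range (n+1), M.wordMap c i (redIter k oneH com i h)

end QShModel
end QShPaper

namespace QShPaper

/-- The distinguished element `j ∈ U(QSh(A), A)`: `j(1) = 1_A`, `j(a) = a` on letters, and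
`j` vanishes on words of length `≥ 2`. -/
def QShModel.IsJ {k : Type*} [Field k] {A Q : Type*} [Ring A] [Algebra k A]
    [AddCommGroup Q] [Module k Q] (M : QShModel k A Q) (j : Q →ₗ[k] A) : Prop :=
  j M.emp = 1 ∧ (∀ a : A, j (M.cons a M.emp) = a) ∧
    ∀ (a b : A) (u : Q), j (M.cons a (M.cons b u)) = 0

end QShPaper

namespace QShPaper

/-- The iterated Rota–Baxter expression `p₋(…(p₋(p₋(a_1)·a_2)·a_3)…·a_{r−1})·a_r`
(without the outermost `p₋`): `rbChain pm a [b_1,…,b_m] = pm(…(pm(a)·b_1)…)·b_m`. -/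
def rbChain {k : Type*} [Field k] {A : Type*} [Ring A] [Algebra k A]
    (pm : A →ₗ[k] A) (a : A) (l : List A) : A :=
  l.foldl (fun x b => pm x * b) a

end QShPaper


/-!
On a word `w a`, convolving with `j` only adds `j₋(w)·a` to `j₋(w a) = -p₋(j₋(w)·a)`, which
gives `p₊(j₋(w)·a) = j₊(w a)`. For the characters, read the quasi-shuffle recursion from the
right: `(u a) ⧢ (v b) = (u ⧢ v b) a + (u a ⧢ v) b + (u ⧢ v)(a b)`. With `X = j₋(u)·a` and
`Y = j₋(v)·b`, induction on the lengths reduces multiplicativity of `j₋` and `j₊` to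
`R (X·p₊Y + p₊X·Y - X·Y) = R X · R Y` for `R = p₊ - id` and `R = p₊`, both of which are the
Rota–Baxter identity once `A` is commutative.
-/

namespace QShPaper

section QuasiShuffle

variable {A : Type*}

/-- The words of `u ⧢ v`, listed with multiplicity. -/
def quasiShuffle [Mul A] : List A → List A → List (List A)
  | [], v => [v]
  | u, [] => [u]
  | a :: u, b :: v =>
      (quasiShuffle u (b :: v)).map (a :: ·) ++ (quasiShuffle (a :: u) v).map (b :: ·) ++
        (quasiShuffle u v).map ((a * b) :: ·)
  termination_by u v => u.length + v.length

variable [Mul A]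

@[simp]
lemma quasiShuffle_nil_left (v : List A) : quasiShuffle [] v = [v] := by
  cases v <;> simp [quasiShuffle]

@[simp]
lemma quasiShuffle_nil_right (u : List A) : quasiShuffle u [] = [u] := by
  cases u <;> simp [quasiShuffle]

lemma quasiShuffle_cons_cons (a b : A) (u v : List A) :
    quasiShuffle (a :: u) (b :: v) =
      (quasiShuffle u (b :: v)).map (a :: ·) ++ (quasiShuffle (a :: u) v).map (b :: ·) ++
        (quasiShuffle u v).map ((a * b) :: ·) := by
  rw [quasiShuffle]

lemma sum_map_quasiShuffle_append_singleton {B : Type*} [AddCommMonoid B] (g : List A → B)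
    (u v : List A) (a b : A) :
    ((quasiShuffle (u ++ [a]) (v ++ [b])).map g).sum =
      ((quasiShuffle u (v ++ [b])).map fun w => g (w ++ [a])).sum +
      ((quasiShuffle (u ++ [a]) v).map fun w => g (w ++ [b])).sum +
      ((quasiShuffle u v).map fun w => g (w ++ [a * b])).sum := by
  induction u generalizing v g with
  | nil =>
    induction v generalizing g with
    | nil =>
      simp only [List.nil_append, quasiShuffle_cons_cons, quasiShuffle_nil_left,
        quasiShuffle_nil_right, List.map_cons, List.map_nil, List.sum_cons, List.sum_nil,
        List.cons_append]
      abel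
    | cons d v ih =>
      have key := ih fun w => g (d :: w)
      simp only [List.nil_append, List.cons_append, quasiShuffle_cons_cons,
        quasiShuffle_nil_left, List.map_append, List.map_map, List.map_cons, List.map_nil,
        List.sum_append, List.sum_cons, List.sum_nil, Function.comp_def] at key ⊢
      rw [key]
      abel
  | cons c u ihu =>
    induction v generalizing g with
    | nil =>
      have key := ihu (fun w => g (c :: w)) []
      simp only [List.nil_append, List.cons_append, quasiShuffle_cons_cons,
        quasiShuffle_nil_right, List.map_append, List.map_map, List.map_cons, List.map_nil,
        List.sum_append, List.sum_cons, List.sum_nil, Function.comp_def] at key ⊢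
      rw [key]
      abel
    | cons d v ihv =>
      have k₁ := ihu (fun w => g (c :: w)) (d :: v)
      have k₂ := ihv fun w => g (d :: w)
      have k₃ := ihu (fun w => g ((c * d) :: w)) v
      simp only [List.cons_append, quasiShuffle_cons_cons, List.map_append, List.map_map,
        List.sum_append, Function.comp_def] at k₁ k₂ k₃ ⊢
      rw [k₁, k₂, k₃]
      abel

end QuasiShuffle

section RotaBaxter

variable {A : Type*} [CommRing A] (p : A →+ A)

lemma sub_id_mul_sub_id_of_rotaBaxter
    (hp : ∀ x y, p x * p y = p (x * p y + p x * y - x * y)) (x y : A) :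
    (p - AddMonoidHom.id A) x * (p - AddMonoidHom.id A) y =
      (p - AddMonoidHom.id A) (x * p y + p x * y - x * y) := by
  simp only [AddMonoidHom.sub_apply, AddMonoidHom.id_apply]
  linear_combination hp x y

lemma sum_map_quasiShuffle_append_singleton_eq_mul (R : A →+ A)
    (hR : ∀ x y, R x * R y = R (x * p y + p x * y - x * y))
    {φ ψ : List A → A} (hφ : ∀ w a, φ (w ++ [a]) = p (φ w * a) - φ w * a)
    (hψ : ∀ w a, ψ (w ++ [a]) = R (φ w * a)) {u v : List A} {a b : A}
    (h₁ : ((quasiShuffle u (v ++ [b])).map φ).sum = φ u * φ (v ++ [b]))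
    (h₂ : ((quasiShuffle (u ++ [a]) v).map φ).sum = φ (u ++ [a]) * φ v)
    (h₃ : ((quasiShuffle u v).map φ).sum = φ u * φ v) :
    ((quasiShuffle (u ++ [a]) (v ++ [b])).map ψ).sum = ψ (u ++ [a]) * ψ (v ++ [b]) := by
  have push (L : List (List A)) (c : A) :
      (L.map fun w => ψ (w ++ [c])).sum = R ((L.map φ).sum * c) := by
    simp only [hψ, ← List.sum_map_mul_right, map_list_sum, List.map_map, Function.comp_def]
  rw [sum_map_quasiShuffle_append_singleton, push, push, push, h₁, h₂, h₃, hφ, hφ, hψ, hψ,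
    hR, ← map_add, ← map_add]
  congr 1
  ring

theorem sum_map_quasiShuffle_eq_mul_of_rotaBaxter_sub_id
    (hp : ∀ x y, p x * p y = p (x * p y + p x * y - x * y))
    {φ : List A → A} (hφ₀ : φ [] = 1)
    (hφ : ∀ w a, φ (w ++ [a]) = p (φ w * a) - φ w * a) (u v : List A) :
    ((quasiShuffle u v).map φ).sum = φ u * φ v := by
  induction u using List.reverseRecOn generalizing v with
  | nil => simp [hφ₀]
  | append_singleton u a ihu =>
    induction v using List.reverseRecOn with
    | nil => simp [hφ₀]
    | append_singleton v b ihv =>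
      exact sum_map_quasiShuffle_append_singleton_eq_mul p _
        (sub_id_mul_sub_id_of_rotaBaxter p hp) hφ hφ (ihu _) ihv (ihu v)

theorem sum_map_quasiShuffle_eq_mul_of_rotaBaxter
    (hp : ∀ x y, p x * p y = p (x * p y + p x * y - x * y))
    {φ ψ : List A → A} (hφ₀ : φ [] = 1)
    (hφ : ∀ w a, φ (w ++ [a]) = p (φ w * a) - φ w * a) (hψ₀ : ψ [] = 1)
    (hψ : ∀ w a, ψ (w ++ [a]) = p (φ w * a)) (u v : List A) :
    ((quasiShuffle u v).map ψ).sum = ψ u * ψ v := by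
  have hφ_mul := sum_map_quasiShuffle_eq_mul_of_rotaBaxter_sub_id p hp hφ₀ hφ
  rcases u.eq_nil_or_concat' with rfl | ⟨u, a, rfl⟩
  · simp [hψ₀]
  rcases v.eq_nil_or_concat' with rfl | ⟨v, b, rfl⟩
  · simp [hψ₀]
  exact sum_map_quasiShuffle_append_singleton_eq_mul p p hp hφ hψ (hφ_mul _ _) (hφ_mul _ _)
    (hφ_mul _ _)

end RotaBaxter

namespace QShModel

section NonUnital

variable {k : Type*} [Field k] {A Q : Type*} [NonUnitalRing A] [Module k A]
    [SMulCommClass k A A] [IsScalarTower k A A] [AddCommGroup Q] [Module k Q]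
    (M : QShModel k A Q)

@[simp]
lemma ofWord_nil : M.ofWord [] = M.emp := rfl

@[simp]
lemma ofWord_cons (a : A) (w : List A) : M.ofWord (a :: w) = M.cons a (M.ofWord w) := rfl

lemma span_range_ofWord : Submodule.span k (Set.range M.ofWord) = ⊤ := M.span_words

lemma mul_ofWord_ofWord (u v : List A) :
    M.mul (M.ofWord u) (M.ofWord v) = ((quasiShuffle u v).map M.ofWord).sum := by
  induction u generalizing v with
  | nil => simp [M.mul_emp_left]
  | cons a u ihu =>
    induction v with
    | nil => simp [M.mul_emp_right]
    | cons b v ihv =>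
      simp only [ofWord_cons, M.mul_cons] at ihv ⊢
      rw [← ofWord_cons, ihu, ihv, ihu, quasiShuffle_cons_cons]
      simp [map_list_sum, Function.comp_def, add_assoc]

lemma map_mem_of_mem_ker_counit {N : Type*} [AddCommGroup N] [Module k N] (f : Q →ₗ[k] N)
    (S : Submodule k N) (hf : ∀ a w, f (M.ofWord (a :: w)) ∈ S) {x : Q}
    (hx : x ∈ LinearMap.ker M.counit) : f x ∈ S := by
  set g := f - LinearMap.toSpanSingleton k N (f M.emp) ∘ₗ M.counit
  have hg : ⊤ ≤ S.comap g := by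
    rw [← M.span_range_ofWord, Submodule.span_le]
    rintro _ ⟨_ | ⟨a, w⟩, rfl⟩
    · simp [g, M.counit_emp]
    · simpa [g, M.counit_cons] using hf a w
  simpa [g, LinearMap.mem_ker.mp hx] using hg (Submodule.mem_top (x := x))

lemma map_mul_of_sum_map_quasiShuffle {B : Type*} [Ring B] [Algebra k B] (f : Q →ₗ[k] B)
    (hf : ∀ u v, ((quasiShuffle u v).map (f ∘ M.ofWord)).sum = f (M.ofWord u) * f (M.ofWord v))
    (x y : Q) : f (M.mul x y) = f x * f y := by
  suffices M.mul.compr₂ f = (LinearMap.mul k B).compl₁₂ f f from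
    LinearMap.congr_fun₂ this x y
  refine LinearMap.ext_on_range M.span_range_ofWord fun u => ?_
  refine LinearMap.ext_on_range M.span_range_ofWord fun v => ?_
  simp [M.mul_ofWord_ofWord, map_list_sum, ← hf]

end NonUnital

section Conv

variable {k : Type*} [Field k] {A Q : Type*} [Ring A] [Algebra k A] [AddCommGroup Q] [Module k Q]
    (M : QShModel k A Q)

lemma conv_emp (f g : Q →ₗ[k] A) : conv k A M.comul f g M.emp = f M.emp * g M.emp := by
  simp [conv, M.comul_emp]

lemma conv_cons (f g : Q →ₗ[k] A) (a : A) (u : Q) :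
    conv k A M.comul f g (M.cons a u) =
      f M.emp * g (M.cons a u) + conv k A M.comul (f ∘ₗ M.cons a) g u := by
  simp [conv, M.comul_cons, ← LinearMap.comp_apply (TensorProduct.map f g),
    ← TensorProduct.map_comp]

lemma conv_ofWord_append_singleton_of_isJ {j : Q →ₗ[k] A} (hj : M.IsJ j) (f : Q →ₗ[k] A)
    (w : List A) (a : A) :
    conv k A M.comul f j (M.ofWord (w ++ [a])) = f (M.ofWord w) * a + f (M.ofWord (w ++ [a])) := by
  induction w generalizing f with
  | nil => simp [conv_cons, conv_emp, hj.1, hj.2.1]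
  | cons c w ih =>
    have hj_long : j (M.cons c (M.ofWord (w ++ [a]))) = 0 := by
      cases w <;> simp [hj.2.2]
    simp only [List.cons_append, ofWord_cons, conv_cons, hj_long, mul_zero, zero_add]
    exact ih (f ∘ₗ M.cons c)

end Conv

end QShModel

section BirkhoffFactors

variable {k : Type*} [Field k] {A Q : Type*} [Ring A] [Algebra k A] [AddCommGroup Q] [Module k Q]
    (M : QShModel k A Q) (p : A →ₗ[k] A)

lemma rbChain_append_singleton (a : A) (w : List A) (b : A) :
    rbChain p a (w ++ [b]) = p (rbChain p a w) * b := by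
  simp [rbChain]

lemma jm_ofWord_append_singleton {jm : Q →ₗ[k] A} (hjm₀ : jm M.emp = 1)
    (hjm : ∀ (a : A) (l : List A),
      jm (M.ofWord (a :: l)) =
        ((-1 : k)) ^ (l.length + 1) •
          ((LinearMap.id : A →ₗ[k] A) - p) (rbChain ((LinearMap.id : A →ₗ[k] A) - p) a l))
    (w : List A) (a : A) :
    jm (M.ofWord (w ++ [a])) = p (jm (M.ofWord w) * a) - jm (M.ofWord w) * a := by
  rcases w with _ | ⟨c, w⟩
  · simpa [hjm₀, rbChain] using hjm a []
  · rw [List.cons_append, hjm, hjm, List.length_append, List.length_singleton,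
      rbChain_append_singleton, pow_succ _ (w.length + 1), mul_neg_one, neg_smul, smul_mul_assoc,
      map_smul, LinearMap.sub_apply, LinearMap.id_apply, smul_sub, neg_sub]

lemma jp_ofWord_append_singleton {jm jp : Q →ₗ[k] A} (hjm₀ : jm M.emp = 1)
    (hjm : ∀ (a : A) (l : List A),
      jm (M.ofWord (a :: l)) =
        ((-1 : k)) ^ (l.length + 1) •
          ((LinearMap.id : A →ₗ[k] A) - p) (rbChain ((LinearMap.id : A →ₗ[k] A) - p) a l))
    (hjp : ∀ (a : A) (l : List A),
      jp (M.ofWord (a :: l)) =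
        ((-1 : k)) ^ l.length • p (rbChain ((LinearMap.id : A →ₗ[k] A) - p) a l))
    (w : List A) (a : A) :
    jp (M.ofWord (w ++ [a])) = p (jm (M.ofWord w) * a) := by
  rcases w with _ | ⟨c, w⟩
  · simpa [hjm₀, rbChain] using hjp a []
  · rw [List.cons_append, hjp, hjm, List.length_append, List.length_singleton,
      rbChain_append_singleton, smul_mul_assoc, map_smul]

end BirkhoffFactors

end QShPaper

open QShPaper in
theorem stmt15_birkhoff_decomposition_of_j_general
    (k : Type*) [Field k]
    (A : Type*) [Ring A] [Algebra k A]
    (p : A →ₗ[k] A)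
    (hRB : ∀ x y : A, p x * p y = p (x * p y) + p (p x * y) - p (x * y))
    (Q : Type*) [AddCommGroup Q] [Module k Q]
    (M : QShModel k A Q) (j : Q →ₗ[k] A) (hj : M.IsJ j)
    (jp jm : Q →ₗ[k] A)
    (hjp1 : jp M.emp = 1)
    (hjp : ∀ (a : A) (l : List A),
      jp (M.ofWord (a :: l)) =
        ((-1 : k)) ^ l.length • p (rbChain ((LinearMap.id : A →ₗ[k] A) - p) a l))
    (hjm1 : jm M.emp = 1)
    (hjm : ∀ (a : A) (l : List A),
      jm (M.ofWord (a :: l)) =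
        ((-1 : k)) ^ (l.length + 1) •
          ((LinearMap.id : A →ₗ[k] A) - p) (rbChain ((LinearMap.id : A →ₗ[k] A) - p) a l)) :
    -- `j₊ ∈ U(QSh(A), A₊)` and `j₋ ∈ U(QSh(A), A₋)`
    (∀ x ∈ LinearMap.ker M.counit, jp x ∈ LinearMap.range p) ∧
    (∀ x ∈ LinearMap.ker M.counit,
      jm x ∈ LinearMap.range ((LinearMap.id : A →ₗ[k] A) - p)) ∧
    -- `j₋ * j = j₊`
    conv k A M.comul jm j = jp ∧
    -- if `A` is commutative, `j₊` and `j₋` are characters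
    ((∀ x y : A, x * y = y * x) →
      (∀ u v : Q, jp (M.mul u v) = jp u * jp v) ∧
      (∀ u v : Q, jm (M.mul u v) = jm u * jm v)) := by
  have hjm_snoc := jm_ofWord_append_singleton M p hjm1 hjm
  have hjp_snoc := jp_ofWord_append_singleton M p hjm1 hjm hjp
  refine ⟨fun x => M.map_mem_of_mem_ker_counit jp _ fun a l => ?_,
    fun x => M.map_mem_of_mem_ker_counit jm _ fun a l => ?_, ?_, fun hc => ?_⟩
  · exact hjp a l ▸ Submodule.smul_mem _ _ (LinearMap.mem_range_self _ _)
  · exact hjm a l ▸ Submodule.smul_mem _ _ (LinearMap.mem_range_self _ _)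
  · refine LinearMap.ext_on_range M.span_range_ofWord fun w => ?_
    rcases w.eq_nil_or_concat' with rfl | ⟨w, a, rfl⟩
    · simp [M.conv_emp, hjm1, hj.1, hjp1]
    · rw [M.conv_ofWord_append_singleton_of_isJ hj, hjm_snoc, hjp_snoc, add_sub_cancel]
  let _ : CommRing A := { ‹Ring A› with mul_comm := hc }
  have hp (x y : A) : p x * p y = p (x * p y + p x * y - x * y) := by
    rw [hRB, map_sub, map_add]
  have hjp_mul := sum_map_quasiShuffle_eq_mul_of_rotaBaxter (p : A →+ A) hp
    (φ := jm ∘ M.ofWord) (ψ := jp ∘ M.ofWord) hjm1 hjm_snoc hjp1 hjp_snoc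
  have hjm_mul := sum_map_quasiShuffle_eq_mul_of_rotaBaxter_sub_id (p : A →+ A) hp
    (φ := jm ∘ M.ofWord) hjm1 hjm_snoc
  exact ⟨M.map_mul_of_sum_map_quasiShuffle jp hjp_mul,
    M.map_mul_of_sum_map_quasiShuffle jm hjm_mul⟩

open QShPaper in
/-- Let `(A, p₊)` be an idempotent Rota–Baxter algebra of weight `−1`.
The maps `j₊, j₋` defined on a word `𝐚 = a_1…a_r` by
`j₊(𝐚) = (−1)^{r−1} p₊(p₋(…(p₋(a_1)·a_2)…)·a_r)` and
`j₋(𝐚) = (−1)^r p₋(p₋(…(p₋(a_1)·a_2)…)·a_r)` satisfy `j₊ ∈ U(QSh(A), A₊)`,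
`j₋ ∈ U(QSh(A), A₋)` and `j₋ * j = j₊`: they are the Birkhoff decomposition of `j`.
If moreover `A` is commutative, `j₊` and `j₋` are characters. -/
theorem stmt15_birkhoff_decomposition_of_j
    (k : Type*) [Field k] [CharZero k]
    (A : Type*) [Ring A] [Algebra k A]
    (p : A →ₗ[k] A) (hidem : p ∘ₗ p = p)
    (hRB : ∀ x y : A, p x * p y = p (x * p y) + p (p x * y) - p (x * y))
    (Q : Type*) [AddCommGroup Q] [Module k Q]
    (M : QShModel k A Q) (j : Q →ₗ[k] A) (hj : M.IsJ j)
    (jp jm : Q →ₗ[k] A)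
    (hjp1 : jp M.emp = 1)
    (hjp : ∀ (a : A) (l : List A),
      jp (M.ofWord (a :: l)) =
        ((-1 : k)) ^ l.length • p (rbChain ((LinearMap.id : A →ₗ[k] A) - p) a l))
    (hjm1 : jm M.emp = 1)
    (hjm : ∀ (a : A) (l : List A),
      jm (M.ofWord (a :: l)) =
        ((-1 : k)) ^ (l.length + 1) •
          ((LinearMap.id : A →ₗ[k] A) - p) (rbChain ((LinearMap.id : A →ₗ[k] A) - p) a l)) :
    -- `j₊ ∈ U(QSh(A), A₊)` and `j₋ ∈ U(QSh(A), A₋)`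
    (∀ x ∈ LinearMap.ker M.counit, jp x ∈ LinearMap.range p) ∧
    (∀ x ∈ LinearMap.ker M.counit,
      jm x ∈ LinearMap.range ((LinearMap.id : A →ₗ[k] A) - p)) ∧
    -- `j₋ * j = j₊`
    conv k A M.comul jm j = jp ∧
    -- if `A` is commutative, `j₊` and `j₋` are characters
    ((∀ x y : A, x * y = y * x) →
      (∀ u v : Q, jp (M.mul u v) = jp u * jp v) ∧
      (∀ u v : Q, jm (M.mul u v) = jm u * jm v)) :=
  stmt15_birkhoff_decomposition_of_j_general k A p hRB Q M j hj jp jm hjp1 hjp hjm1 hjm
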